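/- Let 0 < β₂ ≤ β₁ < 1 and ω > 0. With G*(ω) = (iω)^{β₁}/(1 + (iω)^{β₁-β₂}) (principal branch), Im G*(ω) = (ω^{β₁} sin(β₁π/2) + ω^{2β₁-β₂} sin(β₂π/2)) / (1 + ω^{2(β₁-β₂)} + 2ω^{β₁-β₂} cos((β₁-β₂)π/2)). -/

import Mathlib

open Complex Real

theorem I_mul_ofReal_cpow_ofReal {ω : ℝ} (hω : 0 < ω) (γ : ℝ) :
    (I * ω) ^ (γ : ℂ) = ((ω ^ γ : ℝ) : ℂ) * exp ((γ * π / 2 : ℝ) * I) := by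
  have hω' : (ω : ℂ) ≠ 0 := ofReal_ne_zero.2 hω.ne'
  rw [ofReal_cpow hω.le, cpow_def_of_ne_zero (mul_ne_zero I_ne_zero hω'),
    cpow_def_of_ne_zero hω', ← Complex.exp_add, log_mul_ofReal ω hω I I_ne_zero, log_I,
    ofReal_log hω.le]
  congr 1
  push_cast
  ring

theorem im_ofReal_mul_exp_div_one_add_ofReal_mul_exp (A B θ φ : ℝ) :
    ((A : ℂ) * exp (θ * I) / (1 + B * exp (φ * I))).im
      = (A * Real.sin θ + A * B * Real.sin (θ - φ)) / (1 + B ^ 2 + 2 * B * Real.cos φ) := by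
  have hnormSq : normSq (1 + B * exp (φ * I)) = 1 + B ^ 2 + 2 * B * Real.cos φ := by
    rw [normSq_apply]
    simp only [add_re, add_im, one_re, one_im, re_ofReal_mul, im_ofReal_mul,
      exp_ofReal_mul_I_re, exp_ofReal_mul_I_im]
    linear_combination B ^ 2 * Real.sin_sq_add_cos_sq φ
  rw [div_im, hnormSq, div_sub_div_same, Real.sin_sub]
  simp only [add_re, add_im, one_re, one_im, re_ofReal_mul, im_ofReal_mul,
    exp_ofReal_mul_I_re, exp_ofReal_mul_I_im]
  ring

theorem stmt_13_general (β₁ β₂ ω : ℝ) (hω : 0 < ω) :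
    ((Complex.I * ω) ^ (β₁ : ℂ) / (1 + (Complex.I * ω) ^ ((β₁ - β₂ : ℝ) : ℂ))).im
      = (ω ^ β₁ * Real.sin (β₁ * Real.pi / 2) + ω ^ (2 * β₁ - β₂) * Real.sin (β₂ * Real.pi / 2)) /
        (1 + ω ^ (2 * (β₁ - β₂)) + 2 * ω ^ (β₁ - β₂) * Real.cos ((β₁ - β₂) * Real.pi / 2)) := by
  rw [I_mul_ofReal_cpow_ofReal hω, I_mul_ofReal_cpow_ofReal hω,
    im_ofReal_mul_exp_div_one_add_ofReal_mul_exp, ← rpow_add hω, ← rpow_mul_natCast hω.le]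
  congr 3 <;> ring_nf

theorem stmt_13 (β₁ β₂ ω : ℝ) (h2 : 0 < β₂) (h21 : β₂ ≤ β₁) (h1 : β₁ < 1) (hω : 0 < ω) :
    ((Complex.I * ω) ^ (β₁ : ℂ) / (1 + (Complex.I * ω) ^ ((β₁ - β₂ : ℝ) : ℂ))).im
      = (ω ^ β₁ * Real.sin (β₁ * Real.pi / 2) + ω ^ (2 * β₁ - β₂) * Real.sin (β₂ * Real.pi / 2)) /
        (1 + ω ^ (2 * (β₁ - β₂)) + 2 * ω ^ (β₁ - β₂) * Real.cos ((β₁ - β₂) * Real.pi / 2)) :=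
  stmt_13_general β₁ β₂ ω hω
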